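/- arXiv:1411.2405 — 6 statements merged into one kernel-verified Lean document; each statement's English description precedes it below -/
import Mathlib

section
/- If 0 < a < 1, b > 0 and s > 0, then l has at most one local maximum on (0,∞): there is at most one point γ₀ ∈ (0,∞) such that l(γ) ≤ l(γ₀) for all γ in some punctured neighborhood of γ₀ intersected with (0,∞). -/
open Filter Set Topology

/-- The single-coordinate marginal log-likelihood term arising in the fast
Bayesian compressive-sensing algorithm with a Generalized Beta Mixture prior. -/
noncomputable def l (s q a b γ : ℝ) : ℝ :=
  (1/2) * Real.log (1 / (1 + γ * s)) + (1/2) * q^2 * γ / (1 + γ * s)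
    + (a - 1) * Real.log γ - (a + b) * Real.log (1 + γ)

lemma l_hasDerivAt (s q a b γ : ℝ) (hs : 0 < s) (hγ : 0 < γ) :
    HasDerivAt (l s q a b)
      (-(s/2)/(1+γ*s) + (1/2)*q^2/(1+γ*s)^2 + (a-1)/γ - (a+b)/(1+γ)) γ := by
  have h1pos : 0 < 1 + γ*s := by nlinarith
  have h1ne : (1:ℝ) + γ*s ≠ 0 := ne_of_gt h1pos
  have h2pos : 0 < 1 + γ := by linarith
  have h2ne : (1:ℝ) + γ ≠ 0 := ne_of_gt h2pos
  have hu : HasDerivAt (fun x : ℝ => 1 + x*s) s γ := by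
    simpa using ((hasDerivAt_id γ).mul_const s).const_add 1
  have hv : HasDerivAt (fun x : ℝ => 1 + x) 1 γ := by
    simpa using (hasDerivAt_id γ).const_add 1
  have hlog1 : HasDerivAt (fun x : ℝ => Real.log (1 + x*s)) (s/(1+γ*s)) γ := hu.log h1ne
  have hnum : HasDerivAt (fun x : ℝ => 1/2*q^2*x) (1/2*q^2) γ := by
    simpa using (hasDerivAt_id γ).const_mul (1/2*q^2)
  have h2 : HasDerivAt (fun x : ℝ => 1/2*q^2*x/(1+x*s))
      ((1/2*q^2*(1+γ*s) - 1/2*q^2*γ*s)/(1+γ*s)^2) γ := hnum.div hu h1ne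
  have h3 : HasDerivAt (fun x : ℝ => (a-1)*Real.log x) ((a-1)*γ⁻¹) γ :=
    (Real.hasDerivAt_log hγ.ne').const_mul (a-1)
  have h4 : HasDerivAt (fun x : ℝ => (a+b)*Real.log (1+x)) ((a+b)*(1/(1+γ))) γ :=
    (hv.log h2ne).const_mul (a+b)
  have hL : HasDerivAt (fun x : ℝ => 1/2*(-Real.log (1+x*s)) + 1/2*q^2*x/(1+x*s)
      + (a-1)*Real.log x - (a+b)*Real.log (1+x))
      (1/2*(-(s/(1+γ*s))) + (1/2*q^2*(1+γ*s) - 1/2*q^2*γ*s)/(1+γ*s)^2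
        + (a-1)*γ⁻¹ - (a+b)*(1/(1+γ))) γ :=
    (((hlog1.neg.const_mul (1/2)).add h2).add h3).sub h4
  have hfun : l s q a b = fun x : ℝ => 1/2*(-Real.log (1+x*s)) + 1/2*q^2*x/(1+x*s)
      + (a-1)*Real.log x - (a+b)*Real.log (1+x) := by
    funext x
    simp only [l, one_div, Real.log_inv]
  rw [hfun]
  convert hL using 1
  field_simp
  ring_nf

lemma cubic_vieta (c0 c1 c2 c3 r1 r2 r3 : ℝ) (h12 : r1 ≠ r2) (h13 : r1 ≠ r3) (h23 : r2 ≠ r3)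
    (e1 : c3*r1^3 + c2*r1^2 + c1*r1 + c0 = 0)
    (e2 : c3*r2^3 + c2*r2^2 + c1*r2 + c0 = 0)
    (e3 : c3*r3^3 + c2*r3^2 + c1*r3 + c0 = 0) :
    c0 = -(c3*(r1*r2*r3)) := by
  have h12' : r1 - r2 ≠ 0 := sub_ne_zero.mpr h12
  have h13' : r1 - r3 ≠ 0 := sub_ne_zero.mpr h13
  have h23' : r2 - r3 ≠ 0 := sub_ne_zero.mpr h23
  have key : (r1-r2)*((r1-r3)*((r2-r3)*(c0 + c3*(r1*r2*r3)))) = 0 := by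
    linear_combination (r2*r3*(r2-r3))*e1 - (r1*r3*(r1-r3))*e2 + (r1*r2*(r1-r2))*e3
  simp only [mul_eq_zero, h12', h13', h23', false_or] at key
  linarith

lemma isLocalMax_of_hyp {f : ℝ → ℝ} {x : ℝ} (hx : 0 < x)
    (h : ∀ᶠ γ in 𝓝[(Ioi (0:ℝ)) \ {x}] x, f γ ≤ f x) : IsLocalMax f x := by
  have hmem : Ioi (0:ℝ) ∈ 𝓝[{x}ᶜ] x :=
    mem_nhdsWithin_of_mem_nhds (isOpen_Ioi.mem_nhds hx)
  have h1 : 𝓝[(Ioi (0:ℝ)) \ {x}] x = 𝓝[≠] x := by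
    rw [diff_eq, nhdsWithin_inter_of_mem hmem]
  rw [h1] at h
  have : ∀ᶠ γ in 𝓝 x, f γ ≤ f x := by
    rw [← nhdsNE_sup_pure x]
    exact eventually_sup.mpr ⟨h, eventually_pure.mpr le_rfl⟩
  exact this

/-- Proposition 1: if `0 < a < 1`, `b > 0` and `s > 0`, then `l` has at most one
local maximum on `(0, ∞)`. -/
theorem at_most_one_local_max (s q a b : ℝ) (hs : 0 < s)
    (ha0 : 0 < a) (ha1 : a < 1) (hb : 0 < b) :
    ∀ γ₀ γ₁ : ℝ, γ₀ ∈ Ioi (0:ℝ) → γ₁ ∈ Ioi (0:ℝ) →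
      (∀ᶠ γ in 𝓝[(Ioi (0:ℝ)) \ {γ₀}] γ₀, l s q a b γ ≤ l s q a b γ₀) →
      (∀ᶠ γ in 𝓝[(Ioi (0:ℝ)) \ {γ₁}] γ₁, l s q a b γ ≤ l s q a b γ₁) →
      γ₀ = γ₁ := by
  intro γ₀ γ₁ hγ₀ hγ₁ h₀ h₁
  by_contra hne
  simp only [mem_Ioi] at hγ₀ hγ₁
  wlog hlt : γ₀ < γ₁ generalizing γ₀ γ₁
  · exact this γ₁ γ₀ h₁ h₀ (Ne.symm hne) hγ₁ hγ₀ ((Ne.lt_or_gt hne).resolve_left hlt)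
  -- If the derivative of `l` vanishes at three distinct positive points, contradiction.
  have claim : ∀ r1 r2 r3 : ℝ, 0 < r1 → r1 < r2 → r2 < r3 →
      deriv (l s q a b) r1 = 0 → deriv (l s q a b) r2 = 0 →
      deriv (l s q a b) r3 = 0 → False := by
    intro r1 r2 r3 hr1 h12 h23 d1 d2 d3
    have hr2 : 0 < r2 := hr1.trans h12
    have hr3 : 0 < r3 := hr2.trans h23
    have poly : ∀ x : ℝ, 0 < x → deriv (l s q a b) x = 0 →
        (-(s^2*(3/2+b)))*x^3 + (-(s*(1+s))/2 + q^2/2 + (a-1)*(2*s+s^2) - 2*s*(a+b))*x^2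
          + (-(s/2) + q^2/2 + (a-1)*(1+2*s) - (a+b))*x + (a-1) = 0 := by
      intro x hx hdx
      have hd := l_hasDerivAt s q a b x hs hx
      have h0 : -(s/2)/(1+x*s) + (1/2)*q^2/(1+x*s)^2 + (a-1)/x - (a+b)/(1+x) = 0 := by
        rw [← hd.deriv]; exact hdx
      have h1ne : (1:ℝ) + x*s ≠ 0 := by nlinarith
      have h2ne : (1:ℝ) + x ≠ 0 := by nlinarith
      have key : (-(s^2*(3/2+b)))*x^3 + (-(s*(1+s))/2 + q^2/2 + (a-1)*(2*s+s^2) - 2*s*(a+b))*x^2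
          + (-(s/2) + q^2/2 + (a-1)*(1+2*s) - (a+b))*x + (a-1)
          = (-(s/2)/(1+x*s) + (1/2)*q^2/(1+x*s)^2 + (a-1)/x - (a+b)/(1+x))
              * (x*(1+x)*(1+x*s)^2) := by
        field_simp
        ring
      rw [key, h0, zero_mul]
    have hv := cubic_vieta _ _ _ (-(s^2*(3/2+b))) r1 r2 r3 h12.ne (h12.trans h23).ne h23.ne
      (poly r1 hr1 d1) (poly r2 hr2 d2) (poly r3 hr3 d3)
    have hpos : 0 < s^2*(3/2+b)*(r1*r2*r3) := by
      apply mul_pos (mul_pos (pow_pos hs 2) (by linarith)) (mul_pos (mul_pos hr1 hr2) hr3)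
    nlinarith [hv, hpos]
  have hmax0 : IsLocalMax (l s q a b) γ₀ := isLocalMax_of_hyp hγ₀ h₀
  have hmax1 : IsLocalMax (l s q a b) γ₁ := isLocalMax_of_hyp hγ₁ h₁
  have hcont : ContinuousOn (l s q a b) (Icc γ₀ γ₁) := fun x hx =>
    ((l_hasDerivAt s q a b x hs (lt_of_lt_of_le hγ₀ hx.1)).differentiableAt.continuousAt).continuousWithinAt
  obtain ⟨c, hc, hmin⟩ := isCompact_Icc.exists_isMinOn (nonempty_Icc.mpr hlt.le) hcont
  by_cases hcint : c ∈ Ioo γ₀ γ₁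
  · have hlocmin : IsLocalMin (l s q a b) c := hmin.isLocalMin (Icc_mem_nhds hcint.1 hcint.2)
    exact claim γ₀ c γ₁ hγ₀ hcint.1 hcint.2 hmax0.deriv_eq_zero hlocmin.deriv_eq_zero
      hmax1.deriv_eq_zero
  · have hcases : c = γ₀ ∨ c = γ₁ := by
      rcases hc with ⟨hle1, hle2⟩
      rcases eq_or_lt_of_le hle1 with he | h1'
      · exact Or.inl he.symm
      rcases eq_or_lt_of_le hle2 with he | h2'
      · exact Or.inr he
      exact absurd ⟨h1', h2'⟩ hcint
    rcases hcases with rfl | rfl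
    · -- minimum attained at the left endpoint γ₀ = c
      have hsub : Ioo c γ₁ ⊆ Ioi (0:ℝ) \ {c} := fun x hx => ⟨hγ₀.trans hx.1, hx.1.ne'⟩
      have hev : ∀ᶠ x in 𝓝[Ioo c γ₁] c, l s q a b x = l s q a b c := by
        have h1 : ∀ᶠ x in 𝓝[Ioo c γ₁] c, l s q a b x ≤ l s q a b c :=
          h₀.filter_mono (nhdsWithin_mono _ hsub)
        have h2 : ∀ᶠ x in 𝓝[Ioo c γ₁] c, l s q a b c ≤ l s q a b x :=
          Filter.eventually_of_mem self_mem_nhdsWithin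
            (fun x hx => (isMinOn_iff.mp hmin) x (Ioo_subset_Icc_self hx))
        filter_upwards [h1, h2] with x hx1 hx2; linarith
      obtain ⟨ε, hε, hball⟩ := Metric.mem_nhdsWithin_iff.mp hev
      set u := min (c + ε) γ₁ with hu_def
      have hcu : c < u := lt_min (by linarith) hlt
      have hu1 : u ≤ c + ε := min_le_left _ _
      have hu2 : u ≤ γ₁ := min_le_right _ _
      have hVconst : ∀ x ∈ Ioo c u, l s q a b x = l s q a b c := by
        intro x hx
        exact hball ⟨by
          rw [Metric.mem_ball, Real.dist_eq]
          exact abs_lt.mpr ⟨by linarith [hx.1], by linarith [hx.2]⟩,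
          ⟨hx.1, lt_of_lt_of_le hx.2 hu2⟩⟩
      have hderV : ∀ x ∈ Ioo c u, deriv (l s q a b) x = 0 := by
        intro x hx
        have hmax : IsLocalMax (l s q a b) x := by
          apply Filter.eventually_of_mem (isOpen_Ioo.mem_nhds hx)
          intro y hy
          rw [hVconst y hy, hVconst x hx]
        exact hmax.deriv_eq_zero
      have hd : 0 < u - c := by linarith
      exact claim (c + (u-c)/4) (c + (u-c)/2) (c + 3*(u-c)/4)
        (by linarith) (by linarith) (by linarith)
        (hderV _ ⟨by linarith, by linarith⟩)
        (hderV _ ⟨by linarith, by linarith⟩)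
        (hderV _ ⟨by linarith, by linarith⟩)
    · -- minimum attained at the right endpoint γ₁ = c
      have hsub : Ioo γ₀ c ⊆ Ioi (0:ℝ) \ {c} := fun x hx => ⟨hγ₀.trans hx.1, hx.2.ne⟩
      have hev : ∀ᶠ x in 𝓝[Ioo γ₀ c] c, l s q a b x = l s q a b c := by
        have h1 : ∀ᶠ x in 𝓝[Ioo γ₀ c] c, l s q a b x ≤ l s q a b c :=
          h₁.filter_mono (nhdsWithin_mono _ hsub)
        have h2 : ∀ᶠ x in 𝓝[Ioo γ₀ c] c, l s q a b c ≤ l s q a b x :=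
          Filter.eventually_of_mem self_mem_nhdsWithin
            (fun x hx => (isMinOn_iff.mp hmin) x (Ioo_subset_Icc_self hx))
        filter_upwards [h1, h2] with x hx1 hx2; linarith
      obtain ⟨ε, hε, hball⟩ := Metric.mem_nhdsWithin_iff.mp hev
      set v := max (c - ε) γ₀ with hv_def
      have hvc : v < c := max_lt (by linarith) hlt
      have hv1 : c - ε ≤ v := le_max_left _ _
      have hv2 : γ₀ ≤ v := le_max_right _ _
      have hVconst : ∀ x ∈ Ioo v c, l s q a b x = l s q a b c := by
        intro x hx
        exact hball ⟨by
          rw [Metric.mem_ball, Real.dist_eq]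
          exact abs_lt.mpr ⟨by linarith [hx.1], by linarith [hx.2]⟩,
          ⟨lt_of_le_of_lt hv2 hx.1, hx.2⟩⟩
      have hderV : ∀ x ∈ Ioo v c, deriv (l s q a b) x = 0 := by
        intro x hx
        have hmax : IsLocalMax (l s q a b) x := by
          apply Filter.eventually_of_mem (isOpen_Ioo.mem_nhds hx)
          intro y hy
          rw [hVconst y hy, hVconst x hx]
        exact hmax.deriv_eq_zero
      have hd : 0 < c - v := by linarith
      have hv0 : 0 < v := lt_of_lt_of_le hγ₀ hv2
      exact claim (v + (c-v)/4) (v + (c-v)/2) (v + 3*(c-v)/4)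
        (by linarith) (by linarith) (by linarith)
        (hderV _ ⟨by linarith, by linarith⟩)
        (hderV _ ⟨by linarith, by linarith⟩)
        (hderV _ ⟨by linarith, by linarith⟩)
end

section
/- If a < 1 and s > 0, then l is not bounded above on (0,∞); in particular, l attains no global maximum on (0,∞), i.e., there is no γ₀ > 0 with l(γ) ≤ l(γ₀) for all γ > 0. -/
open Filter Set Topology

lemma l_tendsto_atTop (s q a b : ℝ) (ha : a < 1) :
    Tendsto (l s q a b) (𝓝[>] (0:ℝ)) atTop := by
  have h2 : Tendsto (fun γ : ℝ => (a - 1) * Real.log γ) (𝓝[>] (0:ℝ)) atTop := by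
    have := Real.tendsto_log_nhdsGT_zero
    exact Tendsto.const_mul_atBot_of_neg (by linarith) this
  have hc : ContinuousAt (fun γ : ℝ =>
      (1/2) * Real.log (1 / (1 + γ * s)) + (1/2) * q^2 * γ / (1 + γ * s)
        - (a + b) * Real.log (1 + γ)) 0 := by
    have h1 : (fun γ : ℝ => (1:ℝ) + γ * s) 0 ≠ 0 := by norm_num
    fun_prop (disch := norm_num)
  have h1 : Tendsto (fun γ : ℝ =>
      (1/2) * Real.log (1 / (1 + γ * s)) + (1/2) * q^2 * γ / (1 + γ * s)
        - (a + b) * Real.log (1 + γ)) (𝓝[>] (0:ℝ))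
      (𝓝 ((1/2) * Real.log (1 / (1 + 0 * s)) + (1/2) * q^2 * 0 / (1 + 0 * s)
        - (a + b) * Real.log (1 + 0))) :=
    hc.continuousWithinAt
  have := h2.atTop_add h1
  refine this.congr fun γ => ?_
  simp only [l]
  ring

theorem l_not_bddAbove_no_global_max (s q a b : ℝ) (hs : 0 < s) (ha : a < 1) :
    ¬ BddAbove (l s q a b '' Ioi (0:ℝ)) ∧
      ¬ ∃ γ₀ : ℝ, 0 < γ₀ ∧ ∀ γ : ℝ, 0 < γ → l s q a b γ ≤ l s q a b γ₀ := by
  have key : ¬ BddAbove (l s q a b '' Ioi (0:ℝ)) := by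
    rintro ⟨M, hM⟩
    have := l_tendsto_atTop s q a b ha
    have hev : ∀ᶠ γ in 𝓝[>] (0:ℝ), M + 1 ≤ l s q a b γ := this.eventually_ge_atTop _
    obtain ⟨γ, hγ, hγmem⟩ := (hev.and eventually_mem_nhdsWithin).exists
    have := hM ⟨γ, hγmem, rfl⟩
    linarith
  refine ⟨key, ?_⟩
  rintro ⟨γ₀, hγ₀, hmax⟩
  exact key ⟨l s q a b γ₀, by rintro x ⟨γ, hγ, rfl⟩; exact hmax γ hγ⟩
end

section
/- Suppose a < 1, b > 0, s > 0, and h(γ) ≠ 0 for every γ > 0. Then l′(γ) < 0 for all γ > 0, and consequently l is strictly decreasing on (0,∞). -/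
open Filter Set Topology

/-- The cubic `h`, the numerator of `l'` after clearing denominators:
`2γ(1+γ)(1+sγ)² ⬝ l'(γ) = h(γ)` for `γ > 0`. -/
noncomputable def h (s q a b γ : ℝ) : ℝ :=
  (-(3 + 2*b) * s^2) * γ^3 + (q^2 + (2*a - 3) * s^2 - (5 + 4*b) * s) * γ^2
    + (q^2 + (4*a - 5) * s - 2 - 2*b) * γ + 2 * (a - 1)

/-!
On `(0, ∞)` the factor `2γ(1+γ)(1+sγ)²` is positive, so `l'` has the sign of `h`. The cubic `h`
is continuous with `h 0 = 2(a - 1) < 0`; having no positive root, it stays negative on `(0, ∞)`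
by the intermediate value theorem.
-/

theorem hasDerivAt_l (s q a b : ℝ) {γ : ℝ} (hγ : γ ≠ 0) (hγ₁ : 1 + γ ≠ 0)
    (hγs : 1 + γ * s ≠ 0) :
    HasDerivAt (l s q a b) (h s q a b γ / (2 * γ * (1 + γ) * (1 + γ * s) ^ 2)) γ := by
  have hlin : HasDerivAt (fun x => 1 + x * s) s γ := by
    simpa using ((hasDerivAt_id γ).mul_const s).const_add 1
  have hrecip := (hasDerivAt_const γ (1 : ℝ)).div hlin hγs
  have hsum := (((hrecip.log (one_div_ne_zero hγs)).const_mul (1 / 2)).add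
    (((hasDerivAt_id γ).const_mul ((1 / 2) * q ^ 2)).div hlin hγs)).add
    ((Real.hasDerivAt_log hγ).const_mul (a - 1)) |>.sub
    ((((hasDerivAt_id γ).const_add 1).log hγ₁).const_mul (a + b))
  refine HasDerivAt.congr_deriv (f := l s q a b) hsum ?_
  simp only [h, id, Pi.div_apply]
  field_simp
  ring

theorem neg_of_continuous_of_ne_zero {f : ℝ → ℝ} (hf : Continuous f) (h₀ : f 0 < 0)
    (hne : ∀ x, 0 < x → f x ≠ 0) {x : ℝ} (hx : 0 ≤ x) : f x < 0 := by
  by_contra! hfx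
  obtain ⟨c, hc, hfc⟩ := isPreconnected_Ici.intermediate_value self_mem_Ici hx
    hf.continuousOn ⟨h₀.le, hfx⟩
  rcases (mem_Ici.mp hc).eq_or_lt with rfl | hc
  · exact h₀.ne hfc
  · exact hne c hc hfc

theorem l_strictAnti_of_no_root_general (s q a b : ℝ) (ha : a < 1) (hs : 0 < s)
    (hroot : ∀ γ : ℝ, 0 < γ → h s q a b γ ≠ 0) :
    (∀ γ : ℝ, 0 < γ → deriv (l s q a b) γ < 0) ∧
      StrictAntiOn (l s q a b) (Ioi (0:ℝ)) := by
  have hderiv (γ : ℝ) (hγ : 0 < γ) := hasDerivAt_l s q a b hγ.ne' (by positivity) (by positivity)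
  have h_neg (γ : ℝ) (hγ : 0 < γ) : h s q a b γ < 0 := by
    refine neg_of_continuous_of_ne_zero (by unfold h; fun_prop) ?_ hroot hγ.le
    simp only [h]; linarith
  have hderiv_neg (γ : ℝ) (hγ : 0 < γ) : deriv (l s q a b) γ < 0 := by
    rw [(hderiv γ hγ).deriv]
    exact div_neg_of_neg_of_pos (h_neg γ hγ) (by positivity)
  refine ⟨hderiv_neg, strictAntiOn_of_deriv_neg (convex_Ioi 0) ?_ ?_⟩
  · exact fun γ hγ => (hderiv γ hγ).continuousAt.continuousWithinAt
  · rw [interior_Ioi]; exact hderiv_neg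

theorem l_strictAnti_of_no_root (s q a b : ℝ) (ha : a < 1) (hb : 0 < b) (hs : 0 < s)
    (hroot : ∀ γ : ℝ, 0 < γ → h s q a b γ ≠ 0) :
    (∀ γ : ℝ, 0 < γ → deriv (l s q a b) γ < 0) ∧
      StrictAntiOn (l s q a b) (Ioi (0:ℝ)) :=
  l_strictAnti_of_no_root_general s q a b ha hs hroot
end

section
/- Suppose a < 1, b > 0, s > 0, and suppose 0 < r₁ < r₂ are two distinct roots of h. Then l′ < 0 on (0,r₁), l′ > 0 on (r₁,r₂), and l′ < 0 on (r₂,∞); consequently r₂ is a local maximum point of l on (0,∞) and r₁ is a local minimum point of l on (0,∞). -/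
open Filter Set Topology

theorem sign_of_deriv_l_two_roots (s q a b : ℝ) (ha : a < 1) (hb : 0 < b) (hs : 0 < s)
    (r₁ r₂ : ℝ) (hr₁ : 0 < r₁) (hr₁₂ : r₁ < r₂)
    (hroot₁ : h s q a b r₁ = 0) (hroot₂ : h s q a b r₂ = 0) :
    (∀ γ ∈ Ioo 0 r₁, deriv (l s q a b) γ < 0) ∧
    (∀ γ ∈ Ioo r₁ r₂, 0 < deriv (l s q a b) γ) ∧
    (∀ γ ∈ Ioi r₂, deriv (l s q a b) γ < 0) ∧
    IsLocalMaxOn (l s q a b) (Ioi (0:ℝ)) r₂ ∧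
    IsLocalMinOn (l s q a b) (Ioi (0:ℝ)) r₁ := by
  have hr₂ : 0 < r₂ := hr₁.trans hr₁₂
  set m₁ : ℝ := -(3 + 2*b) * s^2 with hm₁def
  set m₂ : ℝ := q^2 + (2*a - 3) * s^2 - (5 + 4*b) * s with hm₂def
  set m₃ : ℝ := q^2 + (4*a - 5) * s - 2 - 2*b with hm₃def
  set d : ℝ := m₁*(r₁+r₂) + m₂ with hddef
  unfold h at hroot₁ hroot₂
  -- factorization of h
  have hstep : ∀ x : ℝ, h s q a b x =
      (x - r₁) * (m₁*x^2 + (m₁*r₁ + m₂)*x + (m₁*r₁^2 + m₂*r₁ + m₃)) := by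
    intro x
    unfold h
    linear_combination hroot₁
  have hQ2 : m₁*r₂^2 + (m₁*r₁ + m₂)*r₂ + (m₁*r₁^2 + m₂*r₁ + m₃) = 0 := by
    have h2 : h s q a b r₂ = 0 := by unfold h; linarith [hroot₂]
    have := (hstep r₂).symm.trans h2
    rcases mul_eq_zero.mp this with h' | h'
    · exact absurd h' (by linarith)
    · exact h'
  have hfac : ∀ γ : ℝ, h s q a b γ = (γ - r₁) * ((γ - r₂) * (m₁*γ + d)) := by
    intro γ
    rw [hstep γ]
    have : m₁*γ^2 + (m₁*r₁ + m₂)*γ + (m₁*r₁^2 + m₂*r₁ + m₃)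
        = (γ - r₂) * (m₁*γ + d) := by
      rw [hddef]; linear_combination hQ2
    rw [this]
  -- sign facts
  have hm₁neg : m₁ < 0 := by
    have : 0 < (3 + 2*b) * s^2 := by positivity
    rw [hm₁def]; linarith
  have hdneg : d < 0 := by
    have h0 : r₁ * r₂ * d = 2*(a-1) := by
      have := hfac 0
      unfold h at this
      linear_combination -this
    have hrr : 0 < r₁ * r₂ := mul_pos hr₁ hr₂
    by_contra hc
    push_neg at hc
    nlinarith [mul_nonneg hrr.le hc]
  have hlin : ∀ γ : ℝ, 0 < γ → m₁*γ + d < 0 := by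
    intro γ hγ
    have := mul_neg_of_neg_of_pos hm₁neg hγ
    linarith
  -- derivative formula
  have hder : ∀ γ : ℝ, 0 < γ →
      HasDerivAt (l s q a b) (h s q a b γ / (2*γ*(1+γ)*(1+γ*s)^2)) γ := by
    intro γ hγ
    have h1 : (0:ℝ) < 1 + γ*s := by positivity
    have h2 : (0:ℝ) < 1 + γ := by linarith
    have hl : l s q a b = fun x => -((1/2) * Real.log (1+x*s)) + (1/2)*q^2*x/(1+x*s)
        + (a-1)*Real.log x - (a+b)*Real.log (1+x) := by
      funext x
      unfold l
      simp only [one_div, Real.log_inv]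
      ring
    have hA : HasDerivAt (fun x : ℝ => 1 + x*s) s γ := by
      simpa using ((hasDerivAt_id γ).mul_const s).const_add 1
    have hlog1 : HasDerivAt (fun x : ℝ => Real.log (1+x*s)) (s/(1+γ*s)) γ :=
      hA.log h1.ne'
    have hnum : HasDerivAt (fun x : ℝ => (1/2)*q^2*x) ((1/2)*q^2) γ := by
      simpa using (hasDerivAt_id γ).const_mul ((1/2)*q^2)
    have hdiv : HasDerivAt (fun x : ℝ => (1/2)*q^2*x/(1+x*s))
        (((1/2)*q^2*(1+γ*s) - (1/2)*q^2*γ*s)/(1+γ*s)^2) γ := hnum.div hA h1.ne'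
    have hB : HasDerivAt (fun x : ℝ => 1 + x) 1 γ := by
      simpa using (hasDerivAt_id γ).const_add 1
    have hlog2 : HasDerivAt (fun x : ℝ => Real.log (1+x)) (1/(1+γ)) γ := by
      simpa using hB.log h2.ne'
    have hlogγ : HasDerivAt Real.log γ⁻¹ γ := Real.hasDerivAt_log hγ.ne'
    have H : HasDerivAt (fun x : ℝ => -((1/2) * Real.log (1+x*s)) + (1/2)*q^2*x/(1+x*s)
        + (a-1)*Real.log x - (a+b)*Real.log (1+x))
        (-((1/2) * (s/(1+γ*s))) + ((1/2)*q^2*(1+γ*s) - (1/2)*q^2*γ*s)/(1+γ*s)^2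
          + (a-1)*γ⁻¹ - (a+b)*(1/(1+γ))) γ :=
      (((hlog1.const_mul (1/2)).neg.add hdiv).add (hlogγ.const_mul (a-1))).sub
        (hlog2.const_mul (a+b))
    rw [hl]
    convert H using 1
    unfold h
    have e1 : (1 + γ * s) ≠ 0 := h1.ne'
    have e2 : (1 + γ) ≠ 0 := h2.ne'
    field_simp
    ring
  have hderiv_eq : ∀ γ : ℝ, 0 < γ →
      deriv (l s q a b) γ = h s q a b γ / (2*γ*(1+γ)*(1+γ*s)^2) :=
    fun γ hγ => (hder γ hγ).deriv
  have hdenom : ∀ γ : ℝ, 0 < γ → 0 < 2*γ*(1+γ)*(1+γ*s)^2 := by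
    intro γ hγ
    have h1 : (0:ℝ) < 1 + γ*s := by positivity
    have h2 : (0:ℝ) < 1 + γ := by linarith
    positivity
  -- the three sign claims
  have sign1 : ∀ γ ∈ Ioo (0:ℝ) r₁, deriv (l s q a b) γ < 0 := by
    intro γ hγ
    rw [hderiv_eq γ hγ.1]
    apply div_neg_of_neg_of_pos _ (hdenom γ hγ.1)
    rw [hfac γ]
    have hA : 0 < (γ - r₂) * (m₁*γ + d) :=
      mul_pos_of_neg_of_neg (by linarith [hγ.2]) (hlin γ hγ.1)
    exact mul_neg_of_neg_of_pos (by linarith [hγ.2]) hA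
  have sign2 : ∀ γ ∈ Ioo r₁ r₂, 0 < deriv (l s q a b) γ := by
    intro γ hγ
    have hγ0 : 0 < γ := hr₁.trans hγ.1
    rw [hderiv_eq γ hγ0]
    apply div_pos _ (hdenom γ hγ0)
    rw [hfac γ]
    have hA : 0 < (γ - r₂) * (m₁*γ + d) :=
      mul_pos_of_neg_of_neg (by linarith [hγ.2]) (hlin γ hγ0)
    exact mul_pos (by linarith [hγ.1]) hA
  have sign3 : ∀ γ ∈ Ioi r₂, deriv (l s q a b) γ < 0 := by
    intro γ hγ
    have hγ0 : 0 < γ := hr₂.trans hγ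
    rw [hderiv_eq γ hγ0]
    apply div_neg_of_neg_of_pos _ (hdenom γ hγ0)
    rw [hfac γ]
    have hγr : r₂ < γ := hγ
    have hA : (γ - r₂) * (m₁*γ + d) < 0 :=
      mul_neg_of_pos_of_neg (by linarith) (hlin γ hγ0)
    exact mul_neg_of_pos_of_neg (by linarith) hA
  -- monotonicity pieces
  have hdiff : ∀ γ : ℝ, 0 < γ → DifferentiableAt ℝ (l s q a b) γ :=
    fun γ hγ => (hder γ hγ).differentiableAt
  have hcont : ∀ t : Set ℝ, t ⊆ Ioi (0:ℝ) → ContinuousOn (l s q a b) t :=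
    fun t ht x hx => ((hdiff x (ht hx)).continuousAt).continuousWithinAt
  have hmono : StrictMonoOn (l s q a b) (Icc r₁ r₂) := by
    apply strictMonoOn_of_deriv_pos (convex_Icc _ _)
      (hcont _ (fun x hx => lt_of_lt_of_le hr₁ hx.1))
    intro x hx
    rw [interior_Icc] at hx
    exact sign2 x hx
  have hanti2 : StrictAntiOn (l s q a b) (Ici r₂) := by
    apply strictAntiOn_of_deriv_neg (convex_Ici _)
      (hcont _ (fun x hx => lt_of_lt_of_le hr₂ hx))
    intro x hx
    rw [interior_Ici] at hx
    exact sign3 x hx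
  have hanti1 : StrictAntiOn (l s q a b) (Icc (r₁/2) r₁) := by
    apply strictAntiOn_of_deriv_neg (convex_Icc _ _)
      (hcont _ (fun x hx => lt_of_lt_of_le (by linarith) hx.1))
    intro x hx
    rw [interior_Icc] at hx
    exact sign1 x ⟨by linarith [hx.1], hx.2⟩
  refine ⟨sign1, sign2, sign3, ?_, ?_⟩
  · -- local max at r₂
    have hmem : Ioi r₁ ∈ 𝓝[Ioi (0:ℝ)] r₂ :=
      mem_nhdsWithin_of_mem_nhds (Ioi_mem_nhds hr₁₂)
    refine Filter.eventually_of_mem hmem fun x hx => ?_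
    rcases le_or_gt x r₂ with hxr | hxr
    · exact hmono.monotoneOn ⟨le_of_lt hx, hxr⟩ ⟨hr₁₂.le, le_rfl⟩ hxr
    · exact (hanti2.antitoneOn (self_mem_Ici) (le_of_lt hxr) hxr.le)
  · -- local min at r₁
    have hmem : Ioo (r₁/2) r₂ ∈ 𝓝[Ioi (0:ℝ)] r₁ :=
      mem_nhdsWithin_of_mem_nhds (Ioo_mem_nhds (by linarith) hr₁₂)
    refine Filter.eventually_of_mem hmem fun x hx => ?_
    rcases le_or_gt x r₁ with hxr | hxr
    · exact hanti1.antitoneOn ⟨hx.1.le, hxr⟩ ⟨le_of_lt (by linarith), le_rfl⟩ hxr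
    · exact hmono.monotoneOn ⟨le_rfl, hr₁₂.le⟩ ⟨hxr.le, hx.2.le⟩ hxr.le
end

section
/- Let C₀ be a positive definite real M×M matrix, φ, y ∈ ℝᴹ, and γ > 0. Set s = φᵀC₀⁻¹φ, q = φᵀC₀⁻¹y, and C = C₀ + γ·φφᵀ. Then 1 + γs > 0, C is positive definite, and −(1/2)·log det C − (1/2)·yᵀC⁻¹y = −(1/2)·log det C₀ − (1/2)·yᵀC₀⁻¹y − (1/2)·log(1+γs) + (1/2)·γq²/(1+γs). -/
/-!
The rank-one update `C = C₀ + (γφ)φᵀ` changes the determinant by the factor `1 + γs`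
(matrix determinant lemma) and the inverse by the Sherman–Morrison correction
`-(1 + γs)⁻¹ γ (C₀⁻¹φ)(C₀⁻¹φ)ᵀ`, whose quadratic form at `y` is `-γq²/(1 + γs)`.
Positivity of `1 + γs` and of `C` follow from `C₀⁻¹ ≻ 0` and `φφᵀ ⪰ 0`.
-/

open Matrix

namespace Matrix

variable {n α : Type*} [Fintype n] [DecidableEq n] [Field α] {A : Matrix n n α}

theorem det_add_vecMulVec (hA : IsUnit A.det) (u v : n → α) :
    (A + vecMulVec u v).det = A.det * (1 + v ⬝ᵥ (A⁻¹ *ᵥ u)) := by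
  rw [vecMulVec_eq (ι := Unit), det_add_replicateCol_mul_replicateRow hA, det_unique (n := Unit),
    Matrix.mul_assoc, ← replicateCol_mulVec]
  simp only [add_apply, one_apply_eq, replicateRow_mul_replicateCol_apply]

theorem inv_add_vecMulVec (hA : IsUnit A.det) (u v : n → α) (h : 1 + v ⬝ᵥ (A⁻¹ *ᵥ u) ≠ 0) :
    (A + vecMulVec u v)⁻¹ =
      A⁻¹ - (1 + v ⬝ᵥ (A⁻¹ *ᵥ u))⁻¹ • vecMulVec (A⁻¹ *ᵥ u) (v ᵥ* A⁻¹) := by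
  refine inv_eq_right_inv ?_
  set c := (1 + v ⬝ᵥ (A⁻¹ *ᵥ u))⁻¹
  have hc : c * (v ⬝ᵥ (A⁻¹ *ᵥ u)) = 1 - c := by
    simp only [c]
    field_simp
    ring
  rw [Matrix.add_mul, Matrix.mul_sub, Matrix.mul_sub, mul_nonsing_inv _ hA, mul_smul_comm,
    mul_smul_comm, mul_vecMulVec, mulVec_mulVec, mul_nonsing_inv _ hA, one_mulVec,
    vecMulVec_mul_vecMulVec, vecMulVec_mul, vecMulVec_smul, smul_smul, hc, sub_smul, one_smul]
  abel

theorem dotProduct_inv_add_vecMulVec_mulVec (hA : IsUnit A.det) (u v y : n → α)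
    (h : 1 + v ⬝ᵥ (A⁻¹ *ᵥ u) ≠ 0) :
    y ⬝ᵥ ((A + vecMulVec u v)⁻¹ *ᵥ y) =
      y ⬝ᵥ (A⁻¹ *ᵥ y) - (y ⬝ᵥ (A⁻¹ *ᵥ u)) * (v ⬝ᵥ (A⁻¹ *ᵥ y)) / (1 + v ⬝ᵥ (A⁻¹ *ᵥ u)) := by
  rw [inv_add_vecMulVec hA u v h, sub_mulVec, smul_mulVec, vecMulVec_mulVec, ← dotProduct_mulVec,
    dotProduct_sub, dotProduct_smul, dotProduct_smul]
  simp only [smul_eq_mul, MulOpposite.smul_eq_mul_unop, MulOpposite.unop_op]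
  ring

end Matrix

/-- The paper's decomposition `ℒ(γ) = ℒ(γ₋ᵢ) + l(γᵢ)` isolating the dependence of the
Gaussian marginal log-likelihood on a single hyper-parameter, combining the matrix
determinant lemma and the Sherman–Morrison formula. Here `s = φᵀC₀⁻¹φ`,
`q = φᵀC₀⁻¹y`, and `C = C₀ + γ·φφᵀ`. -/
theorem rank_one_loglik_decomposition (M : ℕ) (C₀ : Matrix (Fin M) (Fin M) ℝ)
    (hC₀ : C₀.PosDef) (φ y : Fin M → ℝ) (γ : ℝ) (hγ : 0 < γ) :
    0 < 1 + γ * (φ ⬝ᵥ (C₀⁻¹ *ᵥ φ)) ∧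
    (C₀ + γ • vecMulVec φ φ).PosDef ∧
    -(1/2) * Real.log (C₀ + γ • vecMulVec φ φ).det -
        (1/2) * (y ⬝ᵥ ((C₀ + γ • vecMulVec φ φ)⁻¹ *ᵥ y)) =
      -(1/2) * Real.log C₀.det - (1/2) * (y ⬝ᵥ (C₀⁻¹ *ᵥ y)) -
        (1/2) * Real.log (1 + γ * (φ ⬝ᵥ (C₀⁻¹ *ᵥ φ))) +
        (1/2) * γ * (φ ⬝ᵥ (C₀⁻¹ *ᵥ y))^2 / (1 + γ * (φ ⬝ᵥ (C₀⁻¹ *ᵥ φ))) := by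
  have hs : 0 ≤ φ ⬝ᵥ (C₀⁻¹ *ᵥ φ) := by
    simpa using hC₀.inv.posSemidef.dotProduct_mulVec_nonneg φ
  have hpos : 0 < 1 + γ * (φ ⬝ᵥ (C₀⁻¹ *ᵥ φ)) := by positivity
  have hrank : (γ • vecMulVec φ φ).PosSemidef := by
    simpa using (posSemidef_vecMulVec_self_star φ).smul hγ.le
  refine ⟨hpos, hC₀.add_posSemidef hrank, ?_⟩
  have hsymm : C₀⁻¹ᵀ = C₀⁻¹ := by
    simpa [conjTranspose_eq_transpose_of_trivial] using hC₀.inv.isHermitian.eq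
  have hq : y ⬝ᵥ (C₀⁻¹ *ᵥ φ) = φ ⬝ᵥ (C₀⁻¹ *ᵥ y) := by
    rw [← dotProduct_transpose_mulVec, hsymm]
  have hunit : IsUnit C₀.det := hC₀.det_pos.ne'.isUnit
  have hpos' : 0 < 1 + φ ⬝ᵥ (C₀⁻¹ *ᵥ (γ • φ)) := by
    simpa only [mulVec_smul, dotProduct_smul, smul_eq_mul] using hpos
  rw [← smul_vecMulVec, det_add_vecMulVec hunit, Real.log_mul hC₀.det_pos.ne' hpos'.ne',
    dotProduct_inv_add_vecMulVec_mulVec hunit _ _ _ hpos'.ne']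
  simp only [mulVec_smul, dotProduct_smul, smul_eq_mul, hq]
  ring
end

section
/- For all real a > 0, b > 0 and γ > 0, ∫₀^∞ (λᵃ·γ^{a−1}·e^{−λγ}/Γ(a)) · (λ^{b−1}·e^{−λ}/Γ(b)) dλ = (Γ(a+b)/(Γ(a)·Γ(b))) · γ^{a−1}/(1+γ)^{a+b}. -/
/-!
Since `λ ^ a * λ ^ (b - 1) = λ ^ (a + b - 1)` and `e^{-λγ} e^{-λ} = e^{-(1+γ)λ}`, the integrand is
`γ ^ (a - 1) / (Γ(a) Γ(b))` times the unnormalised `Gamma(a + b, 1 + γ)` density, whose integral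
over `(0, ∞)` is `Γ(a + b) / (1 + γ) ^ (a + b)`.
-/

open MeasureTheory Real

theorem integral_rpow_mul_exp_neg_mul_Ioi_eq_Gamma_div {s r : ℝ} (hs : 0 < s) (hr : 0 < r) :
    ∫ t in Set.Ioi (0:ℝ), t ^ (s - 1) * exp (-(r * t)) = Gamma s / r ^ s := by
  rw [integral_rpow_mul_exp_neg_mul_Ioi hs hr, div_rpow zero_le_one hr.le, one_rpow,
    one_div_mul_eq_div]

theorem gamma_mul_gamma_density_eq {a b γ l : ℝ} (hl : 0 < l) :
    (l ^ a * γ ^ (a - 1) * exp (-(l * γ)) / Gamma a) * (l ^ (b - 1) * exp (-l) / Gamma b) =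
      γ ^ (a - 1) / (Gamma a * Gamma b) * (l ^ (a + b - 1) * exp (-((1 + γ) * l))) := by
  have hpow : l ^ (a + b - 1) = l ^ a * l ^ (b - 1) := by
    rw [← rpow_add hl, add_sub_assoc]
  have hexp : exp (-((1 + γ) * l)) = exp (-(l * γ)) * exp (-l) := by
    rw [← exp_add]
    ring_nf
  rw [hpow, hexp]
  ring

/-- The Beta prime distribution is a scale mixture of two Gamma distributions:
integrating the product of the `Gamma(a, λ)` density at `γ` and the `Gamma(b, 1)`
density at `λ` over `λ ∈ (0,∞)` yields the Beta prime density `B′(γ|a,b)`. -/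
theorem gamma_mixture_eq_betaPrime (a b γ : ℝ) (ha : 0 < a) (hb : 0 < b) (hγ : 0 < γ) :
    ∫ l in Set.Ioi (0:ℝ),
        (l ^ a * γ ^ (a - 1) * Real.exp (-(l * γ)) / Real.Gamma a) *
          (l ^ (b - 1) * Real.exp (-l) / Real.Gamma b) =
      (Real.Gamma (a + b) / (Real.Gamma a * Real.Gamma b)) *
        γ ^ (a - 1) / (1 + γ) ^ (a + b) := by
  rw [setIntegral_congr_fun measurableSet_Ioi fun l hl => gamma_mul_gamma_density_eq hl,
    integral_const_mul, integral_rpow_mul_exp_neg_mul_Ioi_eq_Gamma_div (by linarith) (by linarith)]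
  ring
end
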